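/- arXiv:2202.09329 — 2 statements merged into one kernel-verified Lean document; each statement's English description precedes it below -/
import Mathlib

section
/- Let K be a field, P ∈ K[x]^{m×n}, and s ∈ ℤ^n such that P is in s-weak Popov form. Let t = rdeg_s(P) ∈ ℤ^m, and let Q ∈ K[x]^{k×m} be in t-weak Popov form. Then the product Q·P is in s-weak Popov form. -/
open Polynomial Matrix

noncomputable section

variable {K : Type*} [Field K]

/-- Degree of a univariate polynomial, viewed in `ℤ ∪ {⊥}`. -/
def pdegZ (p : K[X]) : WithBot ℤ := p.degree.map (Nat.cast : ℕ → ℤ)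

/-- Shifted degree (`s`-degree) of a row vector. -/
def sdeg {n : ℕ} (s : Fin n → ℤ) (p : Fin n → K[X]) : WithBot ℤ :=
  Finset.univ.sup fun j => pdegZ (p j) + (s j : WithBot ℤ)

/-- `s`-leading matrix of `P`. -/
def leadMat {m n : ℕ} (s : Fin n → ℤ) (P : Matrix (Fin m) (Fin n) K[X]) :
    Matrix (Fin m) (Fin n) K :=
  Matrix.of fun i j =>
    if pdegZ (P i j) + (s j : WithBot ℤ) = sdeg s (P i) then (P i j).leadingCoeff else 0

/-- `P` is `s`-reduced: its `s`-leading matrix has full row rank. -/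
def IsShiftReduced {m n : ℕ} (s : Fin n → ℤ) (P : Matrix (Fin m) (Fin n) K[X]) : Prop :=
  (leadMat s P).rank = m

/-- `j` is the `s`-pivot index of the row `p`: the largest index where the `s`-degree is attained. -/
def IsPivotIndex {n : ℕ} (s : Fin n → ℤ) (p : Fin n → K[X]) (j : Fin n) : Prop :=
  pdegZ (p j) + (s j : WithBot ℤ) = sdeg s p ∧
  ∀ j', j < j' → pdegZ (p j') + (s j' : WithBot ℤ) ≠ sdeg s p

/-- `P` is in `s`-weak Popov form: no zero row and strictly increasing `s`-pivot indices. -/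
def IsWeakPopov {m n : ℕ} (s : Fin n → ℤ) (P : Matrix (Fin m) (Fin n) K[X]) : Prop :=
  (∀ i, P i ≠ 0) ∧ ∃ piv : Fin m → Fin n, StrictMono piv ∧ ∀ i, IsPivotIndex s (P i) (piv i)

/-- The rows of `Kb` form a basis of the left kernel of `F`. -/
def IsKernelBasis {ℓ m : ℕ} {β : Type*} [Fintype β]
    (Kb : Matrix (Fin ℓ) (Fin m) K[X]) (F : Matrix (Fin m) β K[X]) : Prop :=
  (∀ i, Kb i ᵥ* F = 0) ∧
  LinearIndependent K[X] (fun i : Fin ℓ => Kb i) ∧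
  ∀ p : Fin m → K[X], p ᵥ* F = 0 → ∃ u : Fin ℓ → K[X], p = u ᵥ* Kb

/-- Membership in the relation module `Rel_M(F)`. -/
def InRelModule {m n : ℕ} (M : Matrix (Fin n) (Fin n) K[X])
    (F : Matrix (Fin m) (Fin n) K[X]) (p : Fin m → K[X]) : Prop :=
  ∃ q : Fin n → K[X], p ᵥ* F = q ᵥ* M

/-- The rows of `A` form a basis of the relation module `Rel_M(F)`. -/
def IsRelationBasis {ℓ m n : ℕ} (M : Matrix (Fin n) (Fin n) K[X])
    (A : Matrix (Fin ℓ) (Fin m) K[X]) (F : Matrix (Fin m) (Fin n) K[X]) : Prop :=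
  (∀ i, InRelModule M F (A i)) ∧
  LinearIndependent K[X] (fun i : Fin ℓ => A i) ∧
  ∀ p : Fin m → K[X], InRelModule M F p → ∃ u : Fin ℓ → K[X], p = u ᵥ* A

/-- Rank of a polynomial matrix: its rank over the fraction field `K(x)`. -/
def polyRank {α β : Type*} [Fintype β] (F : Matrix α β K[X]) : ℕ :=
  (F.map (algebraMap K[X] (RatFunc K))).rank

/-- Lexicographic comparison of tuples. -/
def lexLE {r n : ℕ} (a b : Fin r → Fin n) : Prop :=
  ∀ i, (∀ k, k < i → a k = b k) → a i ≤ b i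

/-- `j` lists the column rank profile of `F`: the lexicographically smallest strictly
increasing tuple of `rank F` column indices selecting columns of full rank. -/
def IsColRankProfile {α : Type*} {n r : ℕ} (F : Matrix α (Fin n) K[X])
    (j : Fin r → Fin n) : Prop :=
  StrictMono j ∧ polyRank F = r ∧ polyRank (F.submatrix id j) = r ∧
  ∀ j' : Fin r → Fin n, StrictMono j' → polyRank (F.submatrix id j') = r → lexLE j j'

lemma strictMono_withBot_natCast : StrictMono (WithBot.map (Nat.cast : ℕ → ℤ)) :=
  WithBot.strictMono_map_iff.mpr Nat.strictMono_cast

lemma pdegZ_eq_bot_iff {p : K[X]} : pdegZ p = ⊥ ↔ p = 0 := by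
  simp [pdegZ, degree_eq_bot]

lemma pdegZ_mul (p q : K[X]) : pdegZ (p * q) = pdegZ p + pdegZ q := by
  simp only [pdegZ, degree_mul]
  exact WithBot.map_add (Nat.castAddMonoidHom ℤ) _ _

lemma pdegZ_add_le (p q : K[X]) : pdegZ (p + q) ≤ max (pdegZ p) (pdegZ q) :=
  (strictMono_withBot_natCast.monotone (degree_add_le p q)).trans_eq
    (strictMono_withBot_natCast.monotone.map_max)

lemma pdegZ_add_eq_left {p q : K[X]} (h : pdegZ q < pdegZ p) : pdegZ (p + q) = pdegZ p := by
  rw [pdegZ, degree_add_eq_left_of_degree_lt (strictMono_withBot_natCast.lt_iff_lt.mp h), pdegZ]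

lemma pdegZ_mul_add (p q : K[X]) (c : WithBot ℤ) :
    pdegZ (p * q) + c = pdegZ p + (pdegZ q + c) := by
  rw [pdegZ_mul, add_assoc]

lemma pdegZ_add_add_le (p q : K[X]) (c : WithBot ℤ) :
    pdegZ (p + q) + c ≤ max (pdegZ p + c) (pdegZ q + c) := by
  rw [max_add_add_right]
  exact add_le_add_left (pdegZ_add_le p q) c

lemma pdegZ_sum_add_le {ι : Type*} {F : Finset ι} {f : ι → K[X]} {c E : WithBot ℤ}
    (h : ∀ l ∈ F, pdegZ (f l) + c ≤ E) : pdegZ (∑ l ∈ F, f l) + c ≤ E :=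
  Finset.sum_induction f (fun p => pdegZ p + c ≤ E)
    (fun _ _ ha hb => (pdegZ_add_add_le _ _ c).trans (max_le ha hb))
    (by simp [pdegZ]) h

lemma pdegZ_sum_add_lt {ι : Type*} {F : Finset ι} {f : ι → K[X]} {c E : WithBot ℤ}
    (hE : E ≠ ⊥) (h : ∀ l ∈ F, pdegZ (f l) + c < E) : pdegZ (∑ l ∈ F, f l) + c < E :=
  Finset.sum_induction f (fun p => pdegZ p + c < E)
    (fun _ _ ha hb => (pdegZ_add_add_le _ _ c).trans_lt (max_lt ha hb))
    (by simpa [pdegZ, bot_lt_iff_ne_bot]) h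

lemma pdegZ_sum_add_eq {ι : Type*} [DecidableEq ι] {F : Finset ι} {f : ι → K[X]} {c : ℤ}
    {E : WithBot ℤ} (hE : E ≠ ⊥) {i : ι} (hi : i ∈ F) (heq : pdegZ (f i) + c = E)
    (hlt : ∀ l ∈ F, l ≠ i → pdegZ (f l) + c < E) : pdegZ (∑ l ∈ F, f l) + c = E := by
  have hrest : pdegZ (∑ l ∈ F.erase i, f l) + c < pdegZ (f i) + c :=
    heq ▸ pdegZ_sum_add_lt hE fun l hl =>
      hlt l (Finset.mem_of_mem_erase hl) (Finset.ne_of_mem_erase hl)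
  rw [← Finset.add_sum_erase F f hi,
    pdegZ_add_eq_left ((WithBot.add_lt_add_iff_right WithBot.coe_ne_bot).mp hrest), heq]

section PivotIndex

variable {n : ℕ} {s : Fin n → ℤ} {p : Fin n → K[X]}

lemma le_sdeg (s : Fin n → ℤ) (p : Fin n → K[X]) (j : Fin n) :
    pdegZ (p j) + (s j : WithBot ℤ) ≤ sdeg s p :=
  Finset.le_sup (f := fun j => pdegZ (p j) + (s j : WithBot ℤ)) (Finset.mem_univ j)

lemma sdeg_eq_bot_iff : sdeg s p = ⊥ ↔ p = 0 := by
  simp [sdeg, pdegZ_eq_bot_iff, funext_iff]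

lemma sdeg_eq_of_le {j : Fin n} {E : WithBot ℤ}
    (hle : ∀ j', pdegZ (p j') + (s j' : WithBot ℤ) ≤ E)
    (heq : pdegZ (p j) + (s j : WithBot ℤ) = E) : sdeg s p = E :=
  le_antisymm (Finset.sup_le fun j' _ => hle j') (heq ▸ le_sdeg s p j)

lemma isPivotIndex_of_le_of_lt {j : Fin n} {E : WithBot ℤ}
    (hle : ∀ j', pdegZ (p j') + (s j' : WithBot ℤ) ≤ E)
    (heq : pdegZ (p j) + (s j : WithBot ℤ) = E)
    (hlt : ∀ j', j < j' → pdegZ (p j') + (s j' : WithBot ℤ) < E) : IsPivotIndex s p j := by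
  obtain rfl := sdeg_eq_of_le hle heq
  exact ⟨heq, fun j' hj' => (hlt j' hj').ne⟩

lemma IsPivotIndex.lt_sdeg {j j' : Fin n} (hp : IsPivotIndex s p j) (hj' : j < j') :
    pdegZ (p j') + (s j' : WithBot ℤ) < sdeg s p :=
  (le_sdeg s p j').lt_of_ne (hp.2 j' hj')

end PivotIndex

section WeakPopov

variable {m n : ℕ}

/- Every term `q l * P l j` has `s`-degree at most `deg (q l) + t l ≤ rdeg_t q`, strictly so
when `l > i₀` (pivot of `q`) or `j > piv l` (pivot of row `l` of `P`); in column `piv i₀` only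
`l = i₀` reaches the bound. -/
lemma sdeg_vecMul_eq_and_isPivotIndex {P : Matrix (Fin m) (Fin n) K[X]} {s : Fin n → ℤ}
    {piv : Fin m → Fin n} (hpiv : StrictMono piv) (hP : ∀ i, IsPivotIndex s (P i) (piv i))
    {t : Fin m → ℤ} (ht : ∀ i, (t i : WithBot ℤ) = sdeg s (P i))
    {q : Fin m → K[X]} (hq : q ≠ 0) {i₀ : Fin m} (hq₀ : IsPivotIndex t q i₀) :
    sdeg s (q ᵥ* P) = sdeg t q ∧ IsPivotIndex s (q ᵥ* P) (piv i₀) := by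
  set D := sdeg t q
  have hD : D ≠ ⊥ := sdeg_eq_bot_iff.not.mpr hq
  have term_le_row (l j) : pdegZ (q l * P l j) + s j ≤ pdegZ (q l) + t l := by
    rw [pdegZ_mul_add, ht l]
    exact add_le_add le_rfl (le_sdeg s (P l) j)
  have term_le (l j) : pdegZ (q l * P l j) + s j ≤ D :=
    (term_le_row l j).trans (le_sdeg t q l)
  have term_lt (l j) (h : i₀ < l ∨ piv l < j) : pdegZ (q l * P l j) + s j < D := by
    rcases h with hl | hj
    · exact (term_le_row l j).trans_lt (hq₀.lt_sdeg hl)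
    by_cases hql : q l = 0
    · simpa [hql, pdegZ, bot_lt_iff_ne_bot] using hD
    calc pdegZ (q l * P l j) + s j = pdegZ (q l) + (pdegZ (P l j) + s j) := pdegZ_mul_add _ _ _
      _ < pdegZ (q l) + t l :=
          WithBot.add_lt_add_left (pdegZ_eq_bot_iff.not.mpr hql) (ht l ▸ (hP l).lt_sdeg hj)
      _ ≤ D := le_sdeg t q l
  have hle (j) : pdegZ ((q ᵥ* P) j) + s j ≤ D := by
    rw [vecMul_apply_eq_sum]
    exact pdegZ_sum_add_le fun l _ => term_le l j
  have heq : pdegZ ((q ᵥ* P) (piv i₀)) + s (piv i₀) = D := by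
    rw [vecMul_apply_eq_sum]
    refine pdegZ_sum_add_eq hD (Finset.mem_univ i₀) ?_ fun l _ hl => term_lt l _ ?_
    · rw [pdegZ_mul_add, (hP i₀).1, ← ht i₀]
      exact hq₀.1
    · exact hl.lt_or_gt.symm.imp id fun h => hpiv h
  have hlt (j) (hj : piv i₀ < j) : pdegZ ((q ᵥ* P) j) + s j < D := by
    rw [vecMul_apply_eq_sum]
    exact pdegZ_sum_add_lt hD fun l _ =>
      term_lt l j ((lt_or_ge i₀ l).imp_right fun h => (hpiv.monotone h).trans_lt hj)
  exact ⟨sdeg_eq_of_le hle heq, isPivotIndex_of_le_of_lt hle heq hlt⟩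

end WeakPopov

/-- Products of shifted weak Popov matrices are shifted weak Popov. -/
theorem stmt4 {K : Type*} [Field K] {m n k : ℕ}
    (P : Matrix (Fin m) (Fin n) K[X]) (s : Fin n → ℤ) (hP : IsWeakPopov s P)
    (t : Fin m → ℤ) (ht : ∀ i, (t i : WithBot ℤ) = sdeg s (P i))
    (Q : Matrix (Fin k) (Fin m) K[X]) (hQ : IsWeakPopov t Q) :
    IsWeakPopov s (Q * P) := by
  obtain ⟨-, piv, hpiv, hP⟩ := hP
  obtain ⟨hQ0, qiv, hqiv, hQ⟩ := hQ
  have hrow (i) := sdeg_vecMul_eq_and_isPivotIndex hpiv hP ht (hQ0 i) (hQ i)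
  refine ⟨fun i h => hQ0 i ?_, piv ∘ qiv, hpiv.comp hqiv, fun i => (hrow i).2⟩
  rw [← sdeg_eq_bot_iff (s := t), ← (hrow i).1, ← mul_apply_eq_vecMul, h, sdeg_eq_bot_iff]

end
end

section
/- Let K be a field, let F ∈ K[x]^{m×n} have rank r, let s ∈ ℤ^m satisfy s ≥ rdeg(F) entrywise, and let Kb ∈ K[x]^{(m−r)×m} be an s-weak Popov basis of Ker(F). Then the sum of the entries of the s-row degree of Kb satisfies Σ rdeg_s(Kb) ≤ Σ s, where Σ s = s_1 + … + s_m. -/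
open Polynomial Matrix

noncomputable section

variable {K : Type*} [Field K]

/-!
Let `piv` be the pivot columns of `Kb` and `R` the complementary set of row indices of `F`.
Because `Kb` is `s`-weak Popov, its pivot minor `g = det Kb[·, piv]` has degree exactly
`Σ rdeg_s(Kb) - Σ_{piv} s`; in particular `g ≠ 0`. A kernel vector `u Kb` supported on `R`
satisfies `u Kb[·, piv] = 0`, so `u = 0`: the rows `F[R, ·]` are independent and some square
submatrix `F[R, C]` has a nonzero determinant `d`, of degree at most `Σ_R s` since
`s ≥ rdeg F`. From `Kb F = 0`, every maximal minor of `Kb` times `d` equals `± g` times a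
complementary minor of `F[·, C]`. The maximal minors of a kernel basis generate the unit ideal
(modulo every maximal ideal the rows of `Kb` stay independent), so `g ∣ d`, and
`deg g ≤ deg d` is the claimed bound.
-/

theorem Equiv.Perm.exists_apply_lt_of_ne_one {α : Type*} [LinearOrder α] [Fintype α]
    {σ : Equiv.Perm α} (hσ : σ ≠ 1) : ∃ a, σ a < a := by
  classical
  by_contra! h
  have hne : σ.support.Nonempty := Finset.nonempty_iff_ne_empty.2 (by simpa using hσ)
  have hmem := σ.support.max'_mem hne
  exact Equiv.Perm.mem_support.1 hmem <| le_antisymm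
    (σ.support.le_max' _ (Equiv.Perm.apply_mem_support.2 hmem)) (h _)

theorem Function.Injective.exists_sumEquiv_comp_inl {α β γ : Type*} [Fintype α] [Fintype β]
    [Fintype γ] {f : α → β} (hf : Function.Injective f)
    (hcard : Fintype.card α + Fintype.card γ = Fintype.card β) :
    ∃ e : α ⊕ γ ≃ β, e ∘ Sum.inl = f := by
  classical
  have : Fintype.card γ = Fintype.card {b // b ∉ Set.range f} := by
    rw [Fintype.card_subtype_compl, Set.card_range_of_injective hf]
    omega
  obtain ⟨eγ⟩ := Fintype.card_eq.1 this
  exact ⟨(Equiv.sumCongr (Equiv.ofInjective f hf) eγ).trans (Equiv.sumCompl _), rfl⟩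

theorem LinearIndependent.exists_det_submatrix_ne_zero_of_field {L : Type*} [Field L]
    {k ι : Type*} [Fintype k] [DecidableEq k] [Fintype ι] {M : Matrix k ι L}
    (h : LinearIndependent L M.row) :
    ∃ c : k → ι, Function.Injective c ∧ (M.submatrix id c).det ≠ 0 := by
  obtain ⟨κ, a, ha, hspan, hli⟩ := exists_linearIndependent' L M.col
  have : Fintype κ := Fintype.ofInjective a ha
  have hcard : Fintype.card κ = Fintype.card k := by
    rw [← h.rank_matrix, rank_eq_finrank_span_cols, ← hspan, finrank_span_eq_card hli]
  let eκ : k ≃ κ := (Fintype.equivOfCardEq hcard).symm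
  refine ⟨a ∘ eκ, ha.comp eκ.injective, ?_⟩
  rw [← isUnit_iff_ne_zero, ← isUnit_iff_isUnit_det, ← linearIndependent_cols_iff_isUnit]
  exact hli.comp eκ eκ.injective

theorem LinearIndependent.exists_det_submatrix_ne_zero {R : Type*} [CommRing R] [IsDomain R]
    {k ι : Type*} [Fintype k] [DecidableEq k] [Fintype ι] {M : Matrix k ι R}
    (h : LinearIndependent R M.row) :
    ∃ c : k → ι, Function.Injective c ∧ (M.submatrix id c).det ≠ 0 := by
  let φ := algebraMap R (FractionRing R)
  have hφ : LinearIndependent (FractionRing R) (M.map φ).row :=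
    (linearIndependent_algebraMap_comp_iff (S := FractionRing R) (v := M.row)).2 h
  obtain ⟨c, hc, hdet⟩ := hφ.exists_det_submatrix_ne_zero_of_field
  refine ⟨c, hc, fun h0 => hdet ?_⟩
  rw [submatrix_map, ← RingHom.mapMatrix_apply, ← RingHom.map_det, h0, map_zero]

theorem Matrix.det_submatrix_mul_det_submatrix_of_mul_eq_zero {R : Type*} [CommRing R]
    {k l ι : Type*} [Fintype k] [Fintype l] [Fintype ι] [DecidableEq k] [DecidableEq l]
    [DecidableEq ι] {A : Matrix k ι R} {B : Matrix ι l R} (hAB : A * B = 0)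
    (e₁ e₂ : k ⊕ l ≃ ι) :
    (A.submatrix id (e₁ ∘ Sum.inl)).det * (B.submatrix (e₂ ∘ Sum.inr) id).det =
      Equiv.Perm.sign (e₂.trans e₁.symm) *
        ((A.submatrix id (e₂ ∘ Sum.inl)).det * (B.submatrix (e₁ ∘ Sum.inr) id).det) := by
  -- `P * Q` is block lower triangular with diagonal blocks `A[·, e₁ ∘ inl]` and
  -- `B[e₂ ∘ inr, ·]`, while `P` and `Q` become block upper triangular once their columns,
  -- resp. rows, are listed along `e₂`, resp. `e₁`.
  let P : Matrix (k ⊕ l) ι R := fromRows A ((1 : Matrix ι ι R).submatrix (e₂ ∘ Sum.inr) id)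
  let Q : Matrix ι (k ⊕ l) R := fromCols ((1 : Matrix ι ι R).submatrix id (e₁ ∘ Sum.inl)) B
  have hPQ : P * Q = fromBlocks (A.submatrix id (e₁ ∘ Sum.inl)) 0
      ((1 : Matrix ι ι R).submatrix (e₂ ∘ Sum.inr) (e₁ ∘ Sum.inl))
      (B.submatrix (e₂ ∘ Sum.inr) id) := by
    rw [fromRows_mul_fromCols, hAB]
    congr 1 <;> ext <;> simp [mul_apply, one_apply]
  have hP : P.submatrix id e₂ = fromBlocks (A.submatrix id (e₂ ∘ Sum.inl))
      (A.submatrix id (e₂ ∘ Sum.inr)) 0 1 := by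
    ext (i | i) (j | j) <;> simp [P, one_apply]
  have hQ : Q.submatrix e₁ id = fromBlocks 1 (B.submatrix (e₁ ∘ Sum.inl) id) 0
      (B.submatrix (e₁ ∘ Sum.inr) id) := by
    ext (i | i) (j | j) <;> simp [Q, one_apply]
  have hQ' : Q.submatrix e₂ id = (Q.submatrix e₁ id).submatrix (e₂.trans e₁.symm) id := by
    ext i j; simp
  have hdet : (P * Q).det = (P.submatrix id e₂).det * (Q.submatrix e₂ id).det := by
    rw [← det_mul, submatrix_mul_equiv, submatrix_id_id]
  rw [hPQ, hP, hQ', det_permute, hQ, det_fromBlocks_zero₂₁, det_fromBlocks_zero₂₁,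
    det_fromBlocks_zero₁₂] at hdet
  simp only [det_one, mul_one, one_mul] at hdet
  rw [hdet]
  ring

theorem Polynomial.degree_det_eq_degree_prod_diag {n R : Type*} [Fintype n] [DecidableEq n]
    [CommRing R] (M : Matrix n n R[X])
    (h : ∀ σ : Equiv.Perm n, σ ≠ 1 → (∏ i, M (σ i) i).degree < (∏ i, M i i).degree) :
    M.det.degree = (∏ i, M i i).degree := by
  rw [det_apply, ← Finset.add_sum_erase _ _ (Finset.mem_univ 1)]
  simp only [Equiv.Perm.sign_one, one_smul, Equiv.Perm.one_apply]
  rcases (Finset.univ.erase (1 : Equiv.Perm n)).eq_empty_or_nonempty with he | ⟨σ₀, hσ₀⟩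
  · rw [he, Finset.sum_empty, add_zero]
  refine degree_add_eq_left_of_degree_lt <| (degree_sum_le _ _).trans_lt <|
    (Finset.sup_lt_iff (bot_le.trans_lt (h σ₀ (Finset.ne_of_mem_erase hσ₀)))).2 fun σ hσ => ?_
  exact (degree_smul_le _ _).trans_lt (h σ (Finset.ne_of_mem_erase hσ))

theorem WithBot.monotone_map_natCast : Monotone (WithBot.map ((↑) : ℕ → ℤ)) :=
  fun _ _ h => (WithBot.map_le_iff _ fun {_ _} => Nat.cast_le).2 h

lemma pdegZ_eq_withBotMap (p : K[X]) : pdegZ p = (Nat.castAddMonoidHom ℤ).withBotMap p.degree :=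
  rfl

lemma pdegZ_zero : pdegZ (0 : K[X]) = ⊥ :=
  rfl

lemma pdegZ_of_ne_zero {p : K[X]} (hp : p ≠ 0) : pdegZ p = ((p.natDegree : ℤ) : WithBot ℤ) := by
  rw [pdegZ, degree_eq_natDegree hp]
  rfl

lemma pdegZ_mono {p q : K[X]} (h : p.degree ≤ q.degree) : pdegZ p ≤ pdegZ q :=
  WithBot.monotone_map_natCast h

lemma pdegZ_le_of_dvd {p q : K[X]} (h : p ∣ q) (hq : q ≠ 0) : pdegZ p ≤ pdegZ q :=
  pdegZ_mono (degree_le_of_dvd h hq)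

lemma pdegZ_prod {ι : Type*} (t : Finset ι) (f : ι → K[X]) :
    pdegZ (∏ i ∈ t, f i) = ∑ i ∈ t, pdegZ (f i) := by
  simp only [pdegZ_eq_withBotMap, degree_prod, map_sum]

lemma pdegZ_sum_le {ι : Type*} (t : Finset ι) (f : ι → K[X]) :
    pdegZ (∑ i ∈ t, f i) ≤ t.sup fun i => pdegZ (f i) :=
  (WithBot.monotone_map_natCast (degree_sum_le t f)).trans_eq <|
    Finset.apply_sup_eq_sup_comp_of_linearOrder _ WithBot.monotone_map_natCast rfl

lemma pdegZ_det_le {n : Type*} [Fintype n] [DecidableEq n] (M : Matrix n n K[X]) (b : n → ℤ)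
    (hb : ∀ i j, pdegZ (M i j) ≤ b i) : pdegZ M.det ≤ ((∑ i, b i : ℤ) : WithBot ℤ) := by
  rw [det_apply]
  refine (pdegZ_sum_le _ _).trans (Finset.sup_le fun σ _ => ?_)
  calc pdegZ (Equiv.Perm.sign σ • ∏ i, M (σ i) i) ≤ pdegZ (∏ i, M (σ i) i) :=
        pdegZ_mono (degree_smul_le _ _)
    _ = ∑ i, pdegZ (M (σ i) i) := pdegZ_prod _ _
    _ ≤ ∑ i, ((b (σ i) : ℤ) : WithBot ℤ) := Finset.sum_le_sum fun i _ => hb _ _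
    _ = ((∑ i, b i : ℤ) : WithBot ℤ) := by rw [← WithBot.coe_sum, Equiv.sum_comp σ b]

lemma pdegZ_add_le_sdeg {n : ℕ} (s : Fin n → ℤ) (p : Fin n → K[X]) (j : Fin n) :
    pdegZ (p j) + (s j : WithBot ℤ) ≤ sdeg s p :=
  Finset.le_sup (f := fun j => pdegZ (p j) + (s j : WithBot ℤ)) (Finset.mem_univ j)

namespace IsPivotIndex

variable {n : ℕ} {s : Fin n → ℤ} {p : Fin n → K[X]} {j : Fin n}

lemma ne_zero (h : IsPivotIndex s p j) (hp : p ≠ 0) : p j ≠ 0 := by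
  intro hj
  obtain ⟨j', hj'⟩ := Function.ne_iff.1 hp
  have := pdegZ_add_le_sdeg s p j'
  rw [← h.1, hj, pdegZ_zero, WithBot.bot_add, le_bot_iff,
    pdegZ_of_ne_zero hj', ← WithBot.coe_add] at this
  exact WithBot.coe_ne_bot this

lemma sdeg_eq (h : IsPivotIndex s p j) (hp : p ≠ 0) :
    sdeg s p = (((p j).natDegree + s j : ℤ) : WithBot ℤ) := by
  rw [← h.1, pdegZ_of_ne_zero (h.ne_zero hp), WithBot.coe_add]

lemma natDegree_add_le (h : IsPivotIndex s p j) (hp : p ≠ 0) {j' : Fin n} (hj' : p j' ≠ 0) :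
    ((p j').natDegree : ℤ) + s j' ≤ (p j).natDegree + s j := by
  have := pdegZ_add_le_sdeg s p j'
  rwa [h.sdeg_eq hp, pdegZ_of_ne_zero hj', ← WithBot.coe_add, WithBot.coe_le_coe] at this

lemma natDegree_add_lt (h : IsPivotIndex s p j) (hp : p ≠ 0) {j' : Fin n} (hjj' : j < j')
    (hj' : p j' ≠ 0) : ((p j').natDegree : ℤ) + s j' < (p j).natDegree + s j := by
  refine (h.natDegree_add_le hp hj').lt_of_ne fun heq => h.2 j' hjj' ?_
  rw [h.sdeg_eq hp, pdegZ_of_ne_zero hj', ← WithBot.coe_add, heq]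

end IsPivotIndex

section WeakPopov

variable {ℓ m : ℕ} {s : Fin m → ℤ} {P : Matrix (Fin ℓ) (Fin m) K[X]} {piv : Fin ℓ → Fin m}

lemma degree_prod_perm_pivots_lt (hP : ∀ i, P i ≠ 0) (hmono : StrictMono piv)
    (hpiv : ∀ i, IsPivotIndex s (P i) (piv i)) {σ : Equiv.Perm (Fin ℓ)} (hσ : σ ≠ 1) :
    (∏ k, P (σ k) (piv k)).degree < (∏ k, P k (piv k)).degree := by
  have hdiag : ∏ k, P k (piv k) ≠ 0 :=
    Finset.prod_ne_zero_iff.2 fun k _ => (hpiv k).ne_zero (hP k)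
  by_cases hσP : ∃ k, P (σ k) (piv k) = 0
  · obtain ⟨k, hk⟩ := hσP
    rw [Finset.prod_eq_zero (Finset.mem_univ k) hk, degree_zero, bot_lt_iff_ne_bot]
    exact degree_ne_bot.2 hdiag
  push Not at hσP
  rw [degree_eq_natDegree hdiag, degree_eq_natDegree (Finset.prod_ne_zero_iff.2 fun k _ => hσP k),
    natDegree_prod _ _ fun k _ => hσP k, natDegree_prod _ _ fun k _ => (hpiv k).ne_zero (hP k),
    Nat.cast_lt]
  obtain ⟨k₀, hk₀⟩ := Equiv.Perm.exists_apply_lt_of_ne_one hσ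
  have key : ∑ k, (((P (σ k) (piv k)).natDegree : ℤ) + s (piv k)) <
      ∑ k, (((P (σ k) (piv (σ k))).natDegree : ℤ) + s (piv (σ k))) :=
    Finset.sum_lt_sum (fun k _ => (hpiv (σ k)).natDegree_add_le (hP _) (hσP k))
      ⟨k₀, Finset.mem_univ _, (hpiv (σ k₀)).natDegree_add_lt (hP _) (hmono hk₀) (hσP k₀)⟩
  rw [Equiv.sum_comp σ (fun k => ((P k (piv k)).natDegree : ℤ) + s (piv k)),
    Finset.sum_add_distrib, Finset.sum_add_distrib] at key
  exact_mod_cast lt_of_add_lt_add_right key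

lemma degree_det_submatrix_pivots (hP : ∀ i, P i ≠ 0) (hmono : StrictMono piv)
    (hpiv : ∀ i, IsPivotIndex s (P i) (piv i)) :
    (P.submatrix id piv).det.degree = (∏ k, P k (piv k)).degree :=
  degree_det_eq_degree_prod_diag _ fun _ hσ => degree_prod_perm_pivots_lt hP hmono hpiv hσ

lemma det_submatrix_pivots_ne_zero (hP : ∀ i, P i ≠ 0) (hmono : StrictMono piv)
    (hpiv : ∀ i, IsPivotIndex s (P i) (piv i)) : (P.submatrix id piv).det ≠ 0 := by
  rw [← degree_ne_bot, degree_det_submatrix_pivots hP hmono hpiv, degree_ne_bot]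
  exact Finset.prod_ne_zero_iff.2 fun k _ => (hpiv k).ne_zero (hP k)

lemma sum_sdeg_eq_pdegZ_det_add (hP : ∀ i, P i ≠ 0) (hmono : StrictMono piv)
    (hpiv : ∀ i, IsPivotIndex s (P i) (piv i)) :
    ∑ i, sdeg s (P i) = pdegZ (P.submatrix id piv).det + ((∑ i, s (piv i) : ℤ) : WithBot ℤ) := by
  rw [pdegZ, degree_det_submatrix_pivots hP hmono hpiv, ← pdegZ, pdegZ_prod, WithBot.coe_sum,
    ← Finset.sum_add_distrib]
  exact Finset.sum_congr rfl fun i _ => (hpiv i).1.symm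

end WeakPopov

namespace IsKernelBasis

variable {ℓ m : ℕ} {β : Type*} [Fintype β] {Kb : Matrix (Fin ℓ) (Fin m) K[X]}
  {F : Matrix (Fin m) β K[X]}

lemma mul_submatrix_eq_zero (hkb : IsKernelBasis Kb F) {γ : Type*} (C : γ → β) :
    Kb * F.submatrix id C = 0 :=
  Matrix.ext fun i j => congrFun (hkb.1 i) (C j)

lemma vecMul_injective (hkb : IsKernelBasis Kb F) : Function.Injective Kb.vecMul :=
  vecMul_injective_iff.2 hkb.2.1

lemma dvd_of_forall_dvd_vecMul (hkb : IsKernelBasis Kb F) {π : K[X]} {u : Fin ℓ → K[X]}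
    (h : ∀ j, π ∣ (u ᵥ* Kb) j) (i : Fin ℓ) : π ∣ u i := by
  choose q hq using h
  have huq : u ᵥ* Kb = π • q := funext hq
  rcases eq_or_ne π 0 with rfl | hπ
  · have : u = 0 := hkb.vecMul_injective <| show u ᵥ* Kb = 0 ᵥ* Kb by
      rw [huq, zero_smul, zero_vecMul]
    simp [this]
  have hqF : q ᵥ* F = 0 := by
    have : π • (q ᵥ* F) = 0 := by
      rw [← smul_vecMul, ← huq, vecMul_vecMul, ← submatrix_id_id F, hkb.mul_submatrix_eq_zero,
        vecMul_zero]
    exact (smul_eq_zero.1 this).resolve_left hπ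
  obtain ⟨u', hu'⟩ := hkb.2.2 q hqF
  have : u = π • u' := hkb.vecMul_injective <| show u ᵥ* Kb = (π • u') ᵥ* Kb by
    rw [huq, hu', smul_vecMul]
  exact ⟨u' i, by rw [this]; rfl⟩

lemma linearIndependent_map_quotient (hkb : IsKernelBasis Kb F) (I : Ideal K[X]) :
    LinearIndependent (K[X] ⧸ I) (Kb.map (Ideal.Quotient.mk I)).row := by
  obtain ⟨π, rfl⟩ := (IsPrincipalIdealRing.principal I).principal
  rw [Fintype.linearIndependent_iff]
  intro c hc i
  obtain ⟨u, rfl⟩ := (Ideal.Quotient.mk_surjective (I := Ideal.span {π})).comp_left c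
  have hdvd : ∀ j, π ∣ (u ᵥ* Kb) j := fun j => by
    rw [← Ideal.Quotient.eq_zero_iff_dvd, RingHom.map_vecMul, vecMul_eq_sum]
    exact congrFun hc j
  exact (Ideal.Quotient.eq_zero_iff_dvd _ _).2 (hkb.dvd_of_forall_dvd_vecMul hdvd i)

lemma span_det_submatrix_eq_top (hkb : IsKernelBasis Kb F) :
    Ideal.span {x | ∃ T : Fin ℓ → Fin m, Function.Injective T ∧ (Kb.submatrix id T).det = x} =
      ⊤ := by
  by_contra hI
  obtain ⟨𝔪, h𝔪, hle⟩ := Ideal.exists_le_maximal _ hI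
  obtain ⟨T, hT, hdet⟩ := (hkb.linearIndependent_map_quotient 𝔪).exists_det_submatrix_ne_zero
  apply hdet
  rw [submatrix_map, ← RingHom.mapMatrix_apply, ← RingHom.map_det, Ideal.Quotient.eq_zero_iff_mem]
  exact hle (Ideal.subset_span ⟨T, hT, rfl⟩)

lemma dvd_of_forall_dvd_det_mul (hkb : IsKernelBasis Kb F) {g d : K[X]}
    (h : ∀ T : Fin ℓ → Fin m, Function.Injective T → g ∣ (Kb.submatrix id T).det * d) :
    g ∣ d := by
  have h1 : (1 : K[X]) ∈ Ideal.span
      {x | ∃ T : Fin ℓ → Fin m, Function.Injective T ∧ (Kb.submatrix id T).det = x} := by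
    rw [hkb.span_det_submatrix_eq_top]
    trivial
  simpa using Submodule.span_induction (p := fun x _ => g ∣ x * d)
    (fun x hx => by obtain ⟨T, hT, rfl⟩ := hx; exact h T hT) (by simp)
    (fun _ _ _ _ hx hy => by rw [add_mul]; exact dvd_add hx hy)
    (fun a _ _ hx => by rw [smul_eq_mul, mul_assoc]; exact hx.mul_left a) h1

lemma det_submatrix_inl_dvd {γ : Type*} [Fintype γ] [DecidableEq γ] (hkb : IsKernelBasis Kb F)
    (e : Fin ℓ ⊕ γ ≃ Fin m) (C : γ → β) :
    (Kb.submatrix id (e ∘ Sum.inl)).det ∣ (F.submatrix (e ∘ Sum.inr) C).det := by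
  refine hkb.dvd_of_forall_dvd_det_mul fun T hT => ?_
  obtain ⟨e', rfl⟩ := hT.exists_sumEquiv_comp_inl (by simpa using Fintype.card_congr e)
  have := det_submatrix_mul_det_submatrix_of_mul_eq_zero (hkb.mul_submatrix_eq_zero C) e' e
  simp only [submatrix_submatrix, Function.comp_id, Function.id_comp] at this
  rw [this]
  exact (dvd_mul_right _ _).mul_left _

lemma linearIndependent_submatrix_inr {γ : Type*} [Fintype γ] (hkb : IsKernelBasis Kb F)
    (e : Fin ℓ ⊕ γ ≃ Fin m) (hdet : (Kb.submatrix id (e ∘ Sum.inl)).det ≠ 0) :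
    LinearIndependent K[X] (F.submatrix (e ∘ Sum.inr) id).row := by
  rw [Fintype.linearIndependent_iff]
  intro p hp b
  change ∑ b, p b • F (e (Sum.inr b)) = 0 at hp
  let q : Fin m → K[X] := fun i => Sum.elim 0 p (e.symm i)
  have hqF : q ᵥ* F = 0 := by
    rw [vecMul_eq_sum, ← e.sum_comp, Fintype.sum_sum_type]
    simpa [q] using hp
  obtain ⟨u, hu⟩ := hkb.2.2 q hqF
  have hu0 : u = 0 := eq_zero_of_vecMul_eq_zero hdet <| funext fun a =>
    show (u ᵥ* Kb) (e (Sum.inl a)) = 0 by simpa [q] using (congrFun hu (e (Sum.inl a))).symm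
  simpa [q, hu0] using congrFun hu (e (Sum.inr b))

end IsKernelBasis

theorem stmt10_general {K : Type*} [Field K] {m n r : ℕ}
    (F : Matrix (Fin m) (Fin n) K[X])
    (s : Fin m → ℤ) (hs : ∀ i, sdeg (0 : Fin n → ℤ) (F i) ≤ (s i : WithBot ℤ))
    (Kb : Matrix (Fin (m - r)) (Fin m) K[X]) (hkb : IsKernelBasis Kb F)
    (hwp : IsWeakPopov s Kb) :
    ∑ i, sdeg s (Kb i) ≤ ((∑ i, s i : ℤ) : WithBot ℤ) := by
  obtain ⟨hne, piv, hmono, hpiv⟩ := hwp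
  obtain ⟨e, rfl⟩ := hmono.injective.exists_sumEquiv_comp_inl (γ := Fin (m - (m - r)))
    (by simp only [Fintype.card_fin]; omega)
  obtain ⟨C, -, hC⟩ := (hkb.linearIndependent_submatrix_inr e
    (det_submatrix_pivots_ne_zero hne hmono hpiv)).exists_det_submatrix_ne_zero
  have hFdeg : ∀ i j, pdegZ (F i j) ≤ s i := fun i j => by
    simpa using (pdegZ_add_le_sdeg 0 (F i) j).trans (hs i)
  calc ∑ i, sdeg s (Kb i)
      = pdegZ (Kb.submatrix id (e ∘ Sum.inl)).det + ((∑ a, s (e (Sum.inl a)) : ℤ) : WithBot ℤ) :=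
        sum_sdeg_eq_pdegZ_det_add hne hmono hpiv
    _ ≤ pdegZ (F.submatrix (e ∘ Sum.inr) C).det + ((∑ a, s (e (Sum.inl a)) : ℤ) : WithBot ℤ) :=
        add_le_add (pdegZ_le_of_dvd (hkb.det_submatrix_inl_dvd e C) hC) le_rfl
    _ ≤ ((∑ b, s (e (Sum.inr b)) : ℤ) : WithBot ℤ) + ((∑ a, s (e (Sum.inl a)) : ℤ) : WithBot ℤ) :=
        add_le_add (pdegZ_det_le _ (fun b => s (e (Sum.inr b))) fun _ _ => hFdeg _ _) le_rfl
    _ = ((∑ i, s i : ℤ) : WithBot ℤ) := by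
        rw [← WithBot.coe_add, ← e.sum_comp s, Fintype.sum_sum_type, add_comm]

/-- The sum of the `s`-row degrees of an `s`-weak Popov kernel basis is at most `Σ s`. -/
theorem stmt10 {K : Type*} [Field K] {m n r : ℕ}
    (F : Matrix (Fin m) (Fin n) K[X]) (hF : polyRank F = r)
    (s : Fin m → ℤ) (hs : ∀ i, sdeg (0 : Fin n → ℤ) (F i) ≤ (s i : WithBot ℤ))
    (Kb : Matrix (Fin (m - r)) (Fin m) K[X]) (hkb : IsKernelBasis Kb F)
    (hwp : IsWeakPopov s Kb) :
    ∑ i, sdeg s (Kb i) ≤ ((∑ i, s i : ℤ) : WithBot ℤ) :=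
  stmt10_general F s hs Kb hkb hwp

end
end
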